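/- Given the short exact sequence (1): 0 → X → R/𝔪^k ⊕ M → R/𝔪^{k−a} ⊕ R/𝔪^{b} → 0 of finitely generated torsion R-modules with k > exp(M) + 2a, one has exp(X) ≤ exp(M) + a. -/

import Mathlib

/-! Composing `g₁` with the first projection gives a surjection `φ : R/𝔪^k × M → R/𝔪^(k-a)`.
As `π^e` kills `M`, where `e = exp M < k - a`, the image `φ(0 × M)` lies in `𝔪 · R/𝔪^(k-a)`, so
surjectivity forces `φ(1, 0)` to lift to a unit `s`. For `(ū, m)` in the kernel, `π^e u s = 0` in
`R/𝔪^(k-a)`, hence `π^(k-a-e) ∣ u`, and `π^(e+a)` kills both `ū ∈ R/𝔪^k` and `m`. -/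

/-- For a module `M` over a ring `R` with distinguished element `π`,
`modExp π M = exp(M) := min{n ≥ 0 : π^n M = 0}`. -/
noncomputable def modExp {R : Type*} [CommRing R] (π : R)
    (M : Type*) [AddCommGroup M] [Module R M] : ℕ :=
  sInf {n : ℕ | ∀ x : M, π ^ n • x = 0}

theorem modExp_le_of_forall_pow_smul_eq_zero {R : Type*} [CommRing R] {π : R}
    {M : Type*} [AddCommGroup M] [Module R M] {n : ℕ} (h : ∀ x : M, π ^ n • x = 0) :
    modExp π M ≤ n :=
  Nat.sInf_le h

theorem pow_modExp_smul_eq_zero {R : Type*} [CommRing R] {π : R}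
    {M : Type*} [AddCommGroup M] [Module R M] (h : ∃ n : ℕ, ∀ x : M, π ^ n • x = 0) (x : M) :
    π ^ modExp π M • x = 0 :=
  Nat.sInf_mem h x

theorem Ideal.Quotient.smul_mk {R : Type*} [CommRing R] (I : Ideal R) (r t : R) :
    r • Ideal.Quotient.mk I t = Ideal.Quotient.mk I (r * t) :=
  rfl

namespace IsDiscreteValuationRing

local notation "𝔪" => IsLocalRing.maximalIdeal

variable {R : Type*} [CommRing R] [IsDomain R] [IsDiscreteValuationRing R] {π : R}

theorem exists_pow_smul_eq_zero_of_isTorsion (hπ : Irreducible π)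
    {M : Type*} [AddCommGroup M] [Module R M] [Module.Finite R M] (hM : Module.IsTorsion R M) :
    ∃ n : ℕ, ∀ x : M, π ^ n • x = 0 := by
  obtain ⟨r, hr_ann, hr⟩ := Submodule.annihilator_top_inter_nonZeroDivisors hM
  obtain ⟨n, u, rfl⟩ := eq_unit_mul_pow_irreducible (nonZeroDivisors.ne_zero hr) hπ
  refine ⟨n, fun x => ?_⟩
  have hux : (u : R) • π ^ n • x = 0 := by
    rw [← mul_smul]
    exact Submodule.mem_annihilator.mp hr_ann x Submodule.mem_top
  simpa using hux

theorem mk_maximalIdeal_pow_eq_zero_iff (hπ : 𝔪 R = Ideal.span {π}) {n : ℕ} {t : R} :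
    Ideal.Quotient.mk (𝔪 R ^ n) t = 0 ↔ π ^ n ∣ t := by
  rw [Ideal.Quotient.eq_zero_iff_mem, hπ, Ideal.span_singleton_pow, Ideal.mem_span_singleton]

theorem pow_sub_dvd_of_pow_smul_mk_eq_zero (hπ : 𝔪 R = Ideal.span {π}) {e n : ℕ}
    {t : R} (h : π ^ e • Ideal.Quotient.mk (𝔪 R ^ n) t = 0) : π ^ (n - e) ∣ t := by
  rw [Ideal.Quotient.smul_mk, mk_maximalIdeal_pow_eq_zero_iff hπ] at h
  rcases le_or_gt e n with hen | hne
  · have hπe : π ^ e ≠ 0 := pow_ne_zero e ((irreducible_iff_uniformizer π).mpr hπ).ne_zero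
    rwa [← Nat.add_sub_cancel' hen, pow_add, mul_dvd_mul_iff_left hπe] at h
  · simp [Nat.sub_eq_zero_of_le hne.le]

section

variable {M : Type*} [AddCommGroup M] [Module R M] {e k n : ℕ}
  (φ : (R ⧸ 𝔪 R ^ k) × M →ₗ[R] R ⧸ 𝔪 R ^ n)

theorem map_mk_zero {s : R} (hs : Ideal.Quotient.mk _ s = φ (1, 0)) (u : R) :
    φ (Ideal.Quotient.mk _ u, 0) = Ideal.Quotient.mk _ (u * s) := by
  have hu : ((Ideal.Quotient.mk _ u, 0) : (R ⧸ 𝔪 R ^ k) × M) = u • (1, 0) := by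
    rw [Prod.smul_mk, smul_zero, ← map_one (Ideal.Quotient.mk _), Ideal.Quotient.smul_mk, mul_one]
  rw [hu, map_smul, ← hs, Ideal.Quotient.smul_mk]

theorem pow_smul_map_fst_eq (hM : ∀ x : M, π ^ e • x = 0) (q : (R ⧸ 𝔪 R ^ k) × M) :
    π ^ e • φ (q.1, 0) = π ^ e • φ q := by
  rw [← map_smul, ← map_smul]
  congr 1
  ext <;> simp [hM]

theorem isUnit_of_mk_eq_map_one (hπ : 𝔪 R = Ideal.span {π})
    (hM : ∀ x : M, π ^ e • x = 0) (hen : e < n) (hφ : Function.Surjective φ) {s : R}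
    (hs : Ideal.Quotient.mk _ s = φ (1, 0)) : IsUnit s := by
  obtain ⟨q, hq⟩ := hφ 1
  obtain ⟨u, hu⟩ := Ideal.Quotient.mk_surjective q.1
  have h : π ^ e • Ideal.Quotient.mk (𝔪 R ^ n) (1 - u * s) = 0 := by
    rw [map_sub, smul_sub, map_one, ← hq, ← pow_smul_map_fst_eq φ hM, ← hu, map_mk_zero φ hs,
      sub_self]
  have h1 : 1 - u * s ∈ 𝔪 R := by
    rw [hπ, Ideal.mem_span_singleton]
    exact (dvd_pow_self π (by omega)).trans (pow_sub_dvd_of_pow_smul_mk_eq_zero hπ h)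
  exact isUnit_of_mul_isUnit_right (IsLocalRing.isUnit_of_mem_nonunits_one_sub_self _ h1)

theorem pow_smul_fst_eq_zero_of_map_eq_zero (hπ : 𝔪 R = Ideal.span {π})
    (hM : ∀ x : M, π ^ e • x = 0) (hen : e < n) (hnk : n ≤ k) (hφ : Function.Surjective φ)
    {q : (R ⧸ 𝔪 R ^ k) × M} (hq : φ q = 0) : π ^ (k - n + e) • q.1 = 0 := by
  obtain ⟨s, hs⟩ := Ideal.Quotient.mk_surjective (φ (1, 0))
  obtain ⟨q₁, m⟩ := q
  obtain ⟨u, rfl⟩ := Ideal.Quotient.mk_surjective q₁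
  have hus : π ^ e • Ideal.Quotient.mk (𝔪 R ^ n) (u * s) = 0 := by
    rw [← map_mk_zero φ hs, pow_smul_map_fst_eq φ hM (_, m), hq, smul_zero]
  obtain ⟨w, rfl⟩ := ((isUnit_of_mk_eq_map_one φ hπ hM hen hφ hs).dvd_mul_right).mp
    (pow_sub_dvd_of_pow_smul_mk_eq_zero hπ hus)
  rw [Ideal.Quotient.smul_mk, mk_maximalIdeal_pow_eq_zero_iff hπ, ← mul_assoc, ← pow_add]
  exact Dvd.intro w (by rw [show k - n + e + (n - e) = k by omega])

end

end IsDiscreteValuationRing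

theorem dvr_ses_exp_X_le_general
    (R : Type*) [CommRing R] [IsDomain R] [IsDiscreteValuationRing R]
    (π : R) (hπ : IsLocalRing.maximalIdeal R = Ideal.span {π})
    (X M : Type*)
    [AddCommGroup X] [Module R X]
    [AddCommGroup M] [Module R M] [Module.Finite R M]
    (hMtor : Module.IsTorsion R M)
    (k a b : ℕ)
    -- the short exact sequence (1)
    (f₁ : X →ₗ[R] (R ⧸ IsLocalRing.maximalIdeal R ^ k) × M)
    (g₁ : (R ⧸ IsLocalRing.maximalIdeal R ^ k) × M →ₗ[R]
      (R ⧸ IsLocalRing.maximalIdeal R ^ (k - a)) × (R ⧸ IsLocalRing.maximalIdeal R ^ b))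
    (hf₁ : Function.Injective f₁) (hg₁ : Function.Surjective g₁)
    (hfg₁ : Function.Exact f₁ g₁)
    -- the numerical hypothesis
    (hka : modExp π M + 2 * a < k) :
    modExp π X ≤ modExp π M + a := by
  set e := modExp π M
  have hMe : ∀ x : M, π ^ e • x = 0 := pow_modExp_smul_eq_zero
    (IsDiscreteValuationRing.exists_pow_smul_eq_zero_of_isTorsion
      ((IsDiscreteValuationRing.irreducible_iff_uniformizer π).mpr hπ) hMtor)
  have hφ : Function.Surjective ((LinearMap.fst R _ _).comp g₁) :=
    Prod.fst_surjective.comp hg₁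
  refine modExp_le_of_forall_pow_smul_eq_zero fun x => hf₁ ?_
  have hfst := IsDiscreteValuationRing.pow_smul_fst_eq_zero_of_map_eq_zero _ hπ hMe
    (by omega) (Nat.sub_le k a) hφ (q := f₁ x) (by simp [hfg₁.apply_apply_eq_zero])
  rw [map_smul, map_zero]
  ext
  · rwa [Prod.smul_fst, show e + a = k - (k - a) + e by omega]
  · rw [Prod.smul_snd, pow_add, mul_comm, mul_smul, hMe, smul_zero, Prod.snd_zero]

/-- **Lemma 4.3.5(iii) (`lem:key`(iii)).**
Given the short exact sequence
`(1): 0 → X → R/𝔪^k ⊕ M → R/𝔪^{k−a} ⊕ R/𝔪^{b} → 0`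
of finitely generated torsion `R`-modules with `k > exp(M) + 2a`,
one has `exp(X) ≤ exp(M) + a`. -/
theorem dvr_ses_exp_X_le
    (R : Type*) [CommRing R] [IsDomain R] [IsDiscreteValuationRing R]
    (π : R) (hπ : IsLocalRing.maximalIdeal R = Ideal.span {π})
    (X M : Type*)
    [AddCommGroup X] [Module R X] [Module.Finite R X]
    [AddCommGroup M] [Module R M] [Module.Finite R M]
    (hXtor : Module.IsTorsion R X) (hMtor : Module.IsTorsion R M)
    (k a b : ℕ) (hk : 0 < k)
    -- the short exact sequence (1)
    (f₁ : X →ₗ[R] (R ⧸ IsLocalRing.maximalIdeal R ^ k) × M)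
    (g₁ : (R ⧸ IsLocalRing.maximalIdeal R ^ k) × M →ₗ[R]
      (R ⧸ IsLocalRing.maximalIdeal R ^ (k - a)) × (R ⧸ IsLocalRing.maximalIdeal R ^ b))
    (hf₁ : Function.Injective f₁) (hg₁ : Function.Surjective g₁)
    (hfg₁ : Function.Exact f₁ g₁)
    -- the numerical hypothesis
    (hka : modExp π M + 2 * a < k) :
    modExp π X ≤ modExp π M + a :=
  dvr_ses_exp_X_le_general R π hπ X M hMtor k a b f₁ g₁ hf₁ hg₁ hfg₁ hka
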